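/- Let λ ∈ (0,1] be a real number and k ≥ 0 a fixed integer. Let (n_j) and (M_j) be sequences of positive integers with k ≤ n_j ≤ M_j for all j, both tending to infinity, such that n_j/M_j → λ as j → ∞, and for each j let 𝓝_j be a subset of size n_j of a set 𝓜_j of size M_j. Then the averages A(k;M_j,n_j) := (1/M_j^{n_j}) Σ_{x ∈ 𝓜_j^{n_j}} m_k(x)/n_j converge to (λ^k/k!)·e^{−λ} as j → ∞. -/

import Mathlib

/-!
Double counting over the points `y ∈ 𝓝`: the tuples `x` that hit a fixed `y` exactly `k` times
are obtained by choosing the `k` positions and filling the other `n - k` with the `M - 1`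
remaining values. Hence the average is the binomial probability
`C(n, k) (1/M)^k (1 - 1/M)^(n - k)`, and the theorem is the Poisson limit of `Bin(n, 1/M)` with
`n · (1/M) → λ`.
-/

open Filter Finset

section Limits

open Topology Asymptotics

variable {ι : Type*} {l : Filter ι}

theorem tendsto_choose_mul_pow_of_tendsto_mul {n : ι → ℕ} {p : ι → ℝ} {r : ℝ} (k : ℕ)
    (hn : Tendsto n l atTop) (hr : Tendsto (fun i ↦ n i * p i) l (𝓝 r)) :
    Tendsto (fun i ↦ (n i).choose k * p i ^ k) l (𝓝 (r ^ k / k.factorial)) := by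
  have : (fun i ↦ ((n i).choose k : ℝ) * p i ^ k) ~[l] fun i ↦ (n i * p i) ^ k / k.factorial :=
    calc
      _ ~[l] fun i ↦ ((n i : ℝ) ^ k / k.factorial) * p i ^ k :=
        ((isEquivalent_choose k).comp_tendsto hn).mul IsEquivalent.refl
      _ = fun i ↦ (n i * p i) ^ k / k.factorial := by ext; ring
  exact this.tendsto_nhds_iff.mpr ((hr.pow k).div_const _)

theorem tendsto_one_add_div_pow_of_tendsto_div {m a : ι → ℕ} {c : ℝ} (t : ℝ)
    (hm : Tendsto m l atTop) (ha : Tendsto (fun i ↦ (a i : ℝ) / m i) l (𝓝 c)) :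
    Tendsto (fun i ↦ (1 + t / m i) ^ a i) l (𝓝 (Real.exp (t * c))) := by
  -- `(1 + t / m) ^ a = ((1 + t / m) ^ m) ^ (a / m)`, a real power of a base tending to `exp t`
  have hpow : Tendsto (fun i ↦ (1 + t / m i) ^ m i) l (𝓝 (Real.exp t)) :=
    (Real.tendsto_one_add_div_pow_exp t).comp hm
  rw [Real.exp_mul]
  refine ((hpow.rpow ha (Or.inl (Real.exp_pos t).ne')).congr' ?_)
  have hbase : ∀ᶠ i in l, 0 ≤ 1 + t / m i :=
    ((tendsto_const_nhds.div_atTop (tendsto_natCast_atTop_atTop.comp hm)).const_add 1).eventually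
      (Ici_mem_nhds (by norm_num))
  filter_upwards [hbase, hm.eventually_ne_atTop 0] with i hi hmi
  rw [← Real.rpow_natCast_mul hi, mul_div_cancel₀ _ (by exact_mod_cast hmi), Real.rpow_natCast]

end Limits

section Counting

variable {ι α : Type*} [Fintype ι] [DecidableEq ι] [Fintype α] [DecidableEq α]

theorem filter_fiber_eq_piFinset (y : α) (s : Finset ι) :
    ({x : ι → α | ({i | x i = y} : Finset ι) = s} : Finset (ι → α)) =
      Fintype.piFinset fun i ↦ if i ∈ s then {y} else {y}ᶜ := by
  ext x
  simp only [mem_filter, mem_univ, true_and, Fintype.mem_piFinset, Finset.ext_iff]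
  refine forall_congr' fun i ↦ ?_
  split_ifs with h <;> simp [h]

theorem card_fiber_eq (y : α) (s : Finset ι) :
    #{x : ι → α | ({i | x i = y} : Finset ι) = s} =
        (Fintype.card α - 1) ^ (Fintype.card ι - #s) := by
  rw [filter_fiber_eq_piFinset, Fintype.card_piFinset]
  simp [apply_ite card, prod_ite, filter_not, card_compl, card_sdiff]

theorem card_filter_card_fiber_eq (y : α) (k : ℕ) :
    #{x : ι → α | #{i | x i = y} = k} =
      (Fintype.card ι).choose k * (Fintype.card α - 1) ^ (Fintype.card ι - k) := by
  rw [card_eq_sum_card_fiberwise (f := fun x : ι → α ↦ ({i | x i = y} : Finset ι))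
    (t := powersetCard k univ) (fun x hx ↦ by simpa using hx)]
  have hfiber : ∀ s ∈ powersetCard k (univ : Finset ι),
      #{x ∈ {x : ι → α | #{i | x i = y} = k} | ({i | x i = y} : Finset ι) = s} =
        (Fintype.card α - 1) ^ (Fintype.card ι - k) := by
    intro s hs
    rw [mem_powersetCard] at hs
    rw [filter_filter, ← hs.2, ← card_fiber_eq y]
    congr 1
    exact filter_congr fun x _ ↦ and_iff_right_of_imp fun h ↦ h ▸ rfl
  simp [sum_congr rfl hfiber]

theorem sum_card_filter_card_fiber_eq (N : Finset α) (k : ℕ) :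
    ∑ x : ι → α, #{y ∈ N | #{i | x i = y} = k} =
      #N * ((Fintype.card ι).choose k * (Fintype.card α - 1) ^ (Fintype.card ι - k)) := by
  rw [← smul_eq_mul, ← sum_const, ← sum_congr rfl fun y _ ↦ card_filter_card_fiber_eq y k]
  exact sum_card_bipartiteAbove_eq_sum_card_bipartiteBelow _

end Counting

theorem average_card_filter_card_fiber_eq {n M k : ℕ} (hkn : k ≤ n) (hn : n ≠ 0) (hM : M ≠ 0)
    (N : Finset (Fin M)) (hN : #N = n) :
    1 / (M : ℝ) ^ n * ∑ x : Fin n → Fin M, (#{y ∈ N | #{i | x i = y} = k} : ℝ) / n =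
      n.choose k * (1 / M) ^ k * (1 + -1 / M) ^ (n - k) := by
  have hsum := congrArg (Nat.cast : ℕ → ℝ) (sum_card_filter_card_fiber_eq (ι := Fin n) N k)
  push_cast [Fintype.card_fin, hN, Nat.cast_sub (Nat.one_le_iff_ne_zero.mpr hM)] at hsum
  have hpow : (M : ℝ) ^ n = M ^ k * M ^ (n - k) := by rw [← pow_add, Nat.add_sub_cancel' hkn]
  have hn' : (n : ℝ) ≠ 0 := by exact_mod_cast hn
  have hM' : (M : ℝ) ≠ 0 := by exact_mod_cast hM
  have hbase : 1 + -1 / (M : ℝ) = (M - 1) / M := by field_simp; ring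
  rw [← sum_div, hsum, hpow, one_div_pow, hbase, div_pow]
  field_simp

theorem average_tendsto_poisson_general (lam : ℝ) (k : ℕ)
    (n M : ℕ → ℕ)
    (hn : Tendsto n atTop atTop) (hM : Tendsto M atTop atTop)
    (hratio : Tendsto (fun j => (n j : ℝ) / (M j : ℝ)) atTop (nhds lam))
    (𝓝 : ∀ j, Finset (Fin (M j))) (h𝓝 : ∀ j, (𝓝 j).card = n j) :
    Tendsto (fun j =>
        (1 / (M j : ℝ) ^ (n j)) * ∑ x : Fin (n j) → Fin (M j),
          ((((𝓝 j).filter (fun y =>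
              (Finset.univ.filter (fun i : Fin (n j) => x i = y)).card = k)).card : ℝ)
            / (n j : ℝ)))
      atTop (nhds (lam ^ k / (k.factorial : ℝ) * Real.exp (-lam))) := by
  have hMreal : Tendsto (fun j ↦ (M j : ℝ)) atTop atTop := tendsto_natCast_atTop_atTop.comp hM
  have hchoose := tendsto_choose_mul_pow_of_tendsto_mul (p := fun j ↦ 1 / (M j : ℝ)) k hn
    (by simpa only [mul_one_div] using hratio)
  have hexponent : Tendsto (fun j ↦ ((n j - k : ℕ) : ℝ) / M j) atTop (nhds lam) := by
    have hdiff := hratio.sub ((tendsto_const_nhds (x := (k : ℝ))).div_atTop hMreal)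
    rw [sub_zero] at hdiff
    refine hdiff.congr' ?_
    filter_upwards [hn.eventually_ge_atTop k] with j hj
    rw [Nat.cast_sub hj, sub_div]
  have hpow := tendsto_one_add_div_pow_of_tendsto_div (-1) hM hexponent
  rw [neg_one_mul] at hpow
  refine (hchoose.mul hpow).congr' ?_
  filter_upwards [hn.eventually_ge_atTop k, hn.eventually_ne_atTop 0, hM.eventually_ne_atTop 0]
    with j hkn hn0 hM0
  exact (average_card_filter_card_fiber_eq hkn hn0 hM0 (𝓝 j) (h𝓝 j)).symm

/-- If `n_j/M_j → λ ∈ (0,1]` with `k ≤ n_j ≤ M_j` and both `n_j, M_j → ∞`, then the averages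
`A(k;M_j,n_j) = (1/M_j^{n_j}) Σ_x m_k(x)/n_j` converge to `(λ^k/k!) e^{-λ}`. -/
theorem average_tendsto_poisson (lam : ℝ) (hlam0 : 0 < lam) (hlam1 : lam ≤ 1) (k : ℕ)
    (n M : ℕ → ℕ) (hnpos : ∀ j, 0 < n j) (hMpos : ∀ j, 0 < M j)
    (hk : ∀ j, k ≤ n j) (hnM : ∀ j, n j ≤ M j)
    (hn : Tendsto n atTop atTop) (hM : Tendsto M atTop atTop)
    (hratio : Tendsto (fun j => (n j : ℝ) / (M j : ℝ)) atTop (nhds lam))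
    (𝓝 : ∀ j, Finset (Fin (M j))) (h𝓝 : ∀ j, (𝓝 j).card = n j) :
    Tendsto (fun j =>
        (1 / (M j : ℝ) ^ (n j)) * ∑ x : Fin (n j) → Fin (M j),
          ((((𝓝 j).filter (fun y =>
              (Finset.univ.filter (fun i : Fin (n j) => x i = y)).card = k)).card : ℝ)
            / (n j : ℝ)))
      atTop (nhds (lam ^ k / (k.factorial : ℝ) * Real.exp (-lam))) :=
  average_tendsto_poisson_general lam k n M hn hM hratio 𝓝 h𝓝
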